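/- A set of conditionals S is closed under Right Conjunction / And (if A ⇒ B ∈ S and A ⇒ C ∈ S then A ⇒ (B ∧ C) ∈ S) if and only if S can be characterised by a conditional interpretation I = (f, g) satisfying: (1) any two ≤-minimal elements of f(A) are logically equivalent; and (2) if A ∈ g(B) and A ∈ g(C) then A ∈ g(B ∧ C). -/
import Mathlib


inductive Fml (n : ℕ) : Type
  | bot : Fml n
  | var : Fin n → Fml n
  | neg : Fml n → Fml n
  | and : Fml n → Fml n → Fml n
  | or  : Fml n → Fml n → Fml n
  | imp : Fml n → Fml n → Fml n

def Fml.eval {n : ℕ} (v : Fin n → Bool) : Fml n → Bool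
  | .bot => false
  | .var i => v i
  | .neg a => !(a.eval v)
  | .and a b => a.eval v && b.eval v
  | .or a b => a.eval v || b.eval v
  | .imp a b => !(a.eval v) || b.eval v

/-- A ≤ B : the implication A → B is a classical tautology. -/
def Fml.Le {n : ℕ} (A B : Fml n) : Prop :=
  ∀ v : Fin n → Bool, A.eval v = true → B.eval v = true

/-- Logical equivalence. -/
def Fml.Equiv {n : ℕ} (A B : Fml n) : Prop := A.Le B ∧ B.Le A

/-- Strict entailment. -/
def Fml.Lt {n : ℕ} (A B : Fml n) : Prop := A.Le B ∧ ¬ B.Le A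

/-- ≤-minimal elements of a set of formulas. -/
def minLe {n : ℕ} (𝒜 : Set (Fml n)) : Set (Fml n) :=
  {B ∈ 𝒜 | ¬ ∃ C ∈ 𝒜, C.Lt B}

/-- Upward closure 𝒜↑. -/
def upSet {n : ℕ} (𝒜 : Set (Fml n)) : Set (Fml n) :=
  {B | ∃ A ∈ 𝒜, A.Le B}

/-- Smyth order on sets of formulas. -/
def Smyth {n : ℕ} (𝒜 ℬ : Set (Fml n)) : Prop :=
  ∀ B ∈ ℬ, ∃ A ∈ 𝒜, A.Le B

/-- Satisfaction of a conditional A ⇒ B by an interpretation (f, g). -/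
def Sat {n : ℕ} (f g : Fml n → Set (Fml n)) (A B : Fml n) : Prop :=
  (∃ B' ∈ f A, B'.Le B) ∧ A ∈ g B

/-- (f, g) characterises S: S is exactly the set of satisfied conditionals. -/
def Characterises {n : ℕ} (f g : Fml n → Set (Fml n)) (S : Set (Fml n × Fml n)) : Prop :=
  ∀ A B : Fml n, (A, B) ∈ S ↔ Sat f g A B


def tcard {n : ℕ} (B : Fml n) : ℕ :=
  (Finset.univ.filter (fun v : Fin n → Bool => B.eval v = true)).card

lemma tcard_lt {n : ℕ} {C B : Fml n} (h : C.Lt B) : tcard C < tcard B := by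
  apply Finset.card_lt_card
  rw [Finset.ssubset_def]
  constructor
  · intro v hv
    simp only [Finset.mem_filter] at *
    exact ⟨hv.1, h.1 v hv.2⟩
  · intro hsub
    apply h.2
    intro v hv
    have := hsub (Finset.mem_filter.mpr ⟨Finset.mem_univ v, hv⟩)
    simpa using this

lemma exists_min {n : ℕ} (𝒜 : Set (Fml n)) (B : Fml n) (hB : B ∈ 𝒜) :
    ∃ M ∈ minLe 𝒜, M.Le B := by
  generalize h : tcard B = k
  induction k using Nat.strong_induction_on generalizing B with
  | _ k ih =>
    by_cases hmin : ∃ C ∈ 𝒜, C.Lt B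
    · obtain ⟨C, hC, hCB⟩ := hmin
      obtain ⟨M, hM, hMC⟩ := ih (tcard C) (h ▸ tcard_lt hCB) C hC rfl
      exact ⟨M, hM, fun v hv => hCB.1 v (hMC v hv)⟩
    · exact ⟨B, ⟨hB, hmin⟩, fun v hv => hv⟩

theorem and_characterisation (n : ℕ) (S : Set (Fml n × Fml n)) :
    (∀ A B C : Fml n, (A, B) ∈ S → (A, C) ∈ S → (A, B.and C) ∈ S) ↔
      ∃ f g : Fml n → Set (Fml n), Characterises f g S ∧
        (∀ A B C : Fml n, B ∈ minLe (f A) → C ∈ minLe (f A) → B.Equiv C) ∧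
        (∀ A B C : Fml n, A ∈ g B → A ∈ g C → A ∈ g (B.and C)) := by
  constructor
  · intro hAnd
    refine ⟨fun A => {B | (A, B) ∈ S}, fun B => {A | (A, B) ∈ S}, ?_, ?_, ?_⟩
    · intro A B
      constructor
      · intro h
        exact ⟨⟨B, h, fun v hv => hv⟩, h⟩
      · intro h
        exact h.2
    · intro A B C hB hC
      have hBC : B.and C ∈ {B | (A, B) ∈ S} := hAnd A B C hB.1 hC.1
      have hle1 : (B.and C).Le B := by
        intro v hv
        simp [Fml.eval] at hv
        exact hv.1
      have hle2 : (B.and C).Le C := by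
        intro v hv
        simp [Fml.eval] at hv
        exact hv.2
      have hBle : B.Le (B.and C) := by
        by_contra hcon
        exact hB.2 ⟨B.and C, hBC, hle1, hcon⟩
      have hCle : C.Le (B.and C) := by
        by_contra hcon
        exact hC.2 ⟨B.and C, hBC, hle2, hcon⟩
      exact ⟨fun v hv => hle2 v (hBle v hv), fun v hv => hle1 v (hCle v hv)⟩
    · intro A B C hB hC
      exact hAnd A B C hB hC
  · rintro ⟨f, g, hchar, hmin, hg⟩ A B C hAB hAC
    rw [hchar] at hAB hAC ⊢
    obtain ⟨⟨B', hB', hB'B⟩, hgB⟩ := hAB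
    obtain ⟨⟨C', hC', hC'C⟩, hgC⟩ := hAC
    obtain ⟨M, hM, hMB'⟩ := exists_min (f A) B' hB'
    obtain ⟨M', hM', hM'C'⟩ := exists_min (f A) C' hC'
    have heq := hmin A M M' hM hM'
    refine ⟨⟨M, hM.1, ?_⟩, hg A B C hgB hgC⟩
    intro v hv
    have h1 : B.eval v = true := hB'B v (hMB' v hv)
    have h2 : C.eval v = true := hC'C v (hM'C' v (heq.1 v hv))
    simp [Fml.eval, h1, h2]
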